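/- arXiv:2511.01654 — 3 statements merged into one kernel-verified Lean document; each statement's English description precedes it below -/
import Mathlib

section
/- Let t be a positive natural number and m ≥ 1. For any fixed function x : ZMod t → ZMod m and any fixed index I ∈ ZMod t, the pushforward of the uniform probability distribution on (ZMod t) × (ZMod t → ZMod m) under the map (r, ρ) ↦ ((fun j => x (j − r) + ρ j), I + r) equals the uniform probability distribution on (ZMod t → ZMod m) × (ZMod t). In particular, the distribution of this pair does not depend on x or I. -/
/-- Security of the secure array access protocol Π_AA: the rotated-and-masked
share array together with the rotated index share is uniformly distributed,
independently of the secret array share `x` and index `I`. -/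
theorem array_access_message_uniform (t m : ℕ) [NeZero t] [NeZero m]
    (x : ZMod t → ZMod m) (I : ZMod t) :
    PMF.map
      (fun p : ZMod t × (ZMod t → ZMod m) =>
        ((fun j => x (j - p.1) + p.2 j, I + p.1) : (ZMod t → ZMod m) × ZMod t))
      (PMF.uniformOfFintype (ZMod t × (ZMod t → ZMod m)))
      = PMF.uniformOfFintype ((ZMod t → ZMod m) × ZMod t) := by
  set f := fun p : ZMod t × (ZMod t → ZMod m) =>
      ((fun j => x (j - p.1) + p.2 j, I + p.1) : (ZMod t → ZMod m) × ZMod t)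
  set g := fun q : (ZMod t → ZMod m) × ZMod t =>
      ((q.2 - I, fun j => q.1 j - x (j - (q.2 - I))) : ZMod t × (ZMod t → ZMod m))
  have hgf : Function.LeftInverse g f := by
    rintro ⟨r, ρ⟩
    simp [f, g]
  have hfg : Function.RightInverse g f := by
    rintro ⟨y, s⟩
    simp only [f, g]
    refine Prod.ext (funext fun j => ?_) ?_ <;> ring
  ext b
  rw [PMF.map_apply]
  have key : ∀ a, b = f a ↔ a = g b := by
    intro a
    constructor
    · intro h; rw [h, hgf a]
    · intro h; rw [h, hfg b]
  rw [tsum_eq_single (g b) (by intro a ha; simp [key a, ha])]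
  simp [key, PMF.uniformOfFintype_apply]
  ring
end

section
/- Let x, y₀ ∈ ℝ with x > 0, y₀ > 0, and |1 − x·y₀²| < 1, and define the sequence y : ℕ → ℝ by y 0 = y₀ and y (n+1) = (y n / 2) · (3 − x · (y n)²). Then y n converges to 1/√x as n → ∞. -/
/-- Convergence of the Newton–Raphson inverse-square-root iteration to `1/√x`
whenever the initial error has absolute value less than 1. -/
theorem newton_invsqrt_converges (x y₀ : ℝ) (hx : 0 < x) (hy₀ : 0 < y₀)
    (herr : |1 - x * y₀ ^ 2| < 1)
    (y : ℕ → ℝ) (h0 : y 0 = y₀)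
    (hrec : ∀ n, y (n + 1) = (y n / 2) * (3 - x * (y n) ^ 2)) :
    Filter.Tendsto y Filter.atTop (nhds (1 / Real.sqrt x)) := by
  set c := |1 - x * y₀ ^ 2| with hc
  have hc1 : c < 1 := herr
  have hc0 : 0 ≤ c := abs_nonneg _
  have key : ∀ n, 0 < y n ∧ |1 - x * (y n) ^ 2| ≤ c ^ (n + 1) := by
    intro n
    induction n with
    | zero =>
      refine ⟨by simpa [h0] using hy₀, ?_⟩
      simp [h0, hc]
    | succ n ih =>
      obtain ⟨hyp, he⟩ := ih
      have hcn : c ^ (n + 1) ≤ c := pow_le_of_le_one hc0 hc1.le (Nat.succ_ne_zero n)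
      have hen : |1 - x * (y n) ^ 2| < 1 := lt_of_le_of_lt he (lt_of_le_of_lt hcn hc1)
      have hen' := abs_lt.mp hen
      have he' : 1 - x * (y (n + 1)) ^ 2
          = (1 - x * (y n) ^ 2) ^ 2 * (3 + (1 - x * (y n) ^ 2)) / 4 := by
        rw [hrec]; ring
      constructor
      · rw [hrec]
        have h3 : 0 < 3 - x * (y n) ^ 2 := by linarith [hen'.1]
        positivity
      · rw [he']
        have h3 : |3 + (1 - x * (y n) ^ 2)| ≤ 4 := by
          rw [abs_le]; constructor <;> linarith [hen'.1, hen'.2]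
        have habs : |(1 - x * (y n) ^ 2) ^ 2 * (3 + (1 - x * (y n) ^ 2)) / 4|
            = |1 - x * (y n) ^ 2| ^ 2 * |3 + (1 - x * (y n) ^ 2)| / 4 := by
          rw [abs_div, abs_mul, abs_pow]
          norm_num
        rw [habs]
        have h1 : |1 - x * (y n) ^ 2| ^ 2 * |3 + (1 - x * (y n) ^ 2)| / 4
            ≤ |1 - x * (y n) ^ 2| ^ 2 := by
          nlinarith [abs_nonneg (1 - x * (y n) ^ 2), abs_nonneg (3 + (1 - x * (y n) ^ 2)),
            sq_nonneg (|1 - x * (y n) ^ 2|)]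
        have h2 : |1 - x * (y n) ^ 2| ^ 2 ≤ (c ^ (n + 1)) ^ 2 := by
          have := abs_nonneg (1 - x * (y n) ^ 2)
          nlinarith
        have h4 : (c ^ (n + 1)) ^ 2 ≤ c ^ (n + 2) := by
          rw [← pow_mul]
          exact pow_le_pow_of_le_one hc0 hc1.le (by omega)
        linarith
  have hgeo : Filter.Tendsto (fun n => c ^ (n + 1)) Filter.atTop (nhds 0) :=
    (tendsto_pow_atTop_nhds_zero_of_lt_one hc0 hc1).comp (Filter.tendsto_add_atTop_nat 1)
  have hE : Filter.Tendsto (fun n => 1 - x * (y n) ^ 2) Filter.atTop (nhds 0) :=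
    squeeze_zero_norm (fun n => by simpa [Real.norm_eq_abs] using (key n).2) hgeo
  have hX : Filter.Tendsto (fun n => x * (y n) ^ 2) Filter.atTop (nhds 1) := by
    have := (tendsto_const_nhds (x := (1 : ℝ)) (f := Filter.atTop (α := ℕ))).sub hE
    simpa using this
  have hY2 : Filter.Tendsto (fun n => (y n) ^ 2) Filter.atTop (nhds (1 / x)) := by
    have h := hX.div_const x
    have : (fun n => x * (y n) ^ 2 / x) = fun n => (y n) ^ 2 := by
      funext n; field_simp
    rwa [this] at h
  have hS : Filter.Tendsto (fun n => Real.sqrt ((y n) ^ 2)) Filter.atTop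
      (nhds (Real.sqrt (1 / x))) :=
    (Real.continuous_sqrt.tendsto _).comp hY2
  have heq : (fun n => Real.sqrt ((y n) ^ 2)) = y := by
    funext n; exact Real.sqrt_sq (key n).1.le
  rw [heq] at hS
  have : Real.sqrt (1 / x) = 1 / Real.sqrt x := by
    rw [one_div, one_div, Real.sqrt_inv]
  rwa [this] at hS
end

section
/- Let d be a positive natural number and x : Fin d → ℝ. Define g : ℝ → Fin d → ℝ by g s i = exp(s · x i) / (∑ⱼ exp(s · x j)). Then: (a) g 0 i = 1/d for every i; (b) g 1 i = Softmax(x)ᵢ = exp(x i) / ∑ⱼ exp(x j) for every i; and (c) for every s ∈ ℝ and i, the function s ↦ g s i has derivative (x i − ∑ⱼ x j · g s j) · g s i at s. -/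
open Real in
/-- The tempered softmax `g s i = exp(s·xᵢ)/∑ⱼ exp(s·xⱼ)` starts at the uniform
vector, ends at `Softmax(x)`, and solves the softmax ODE. -/
theorem tempered_softmax_ode (d : ℕ) (hd : 0 < d) (x : Fin d → ℝ) :
    let g : ℝ → Fin d → ℝ := fun s i => exp (s * x i) / ∑ j, exp (s * x j)
    (∀ i, g 0 i = 1 / d) ∧
    (∀ i, g 1 i = exp (x i) / ∑ j, exp (x j)) ∧
    (∀ (s : ℝ) (i : Fin d),
      HasDerivAt (fun s => g s i) ((x i - ∑ j, x j * g s j) * g s i) s) := by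
  intro g
  have hSpos : ∀ s : ℝ, 0 < ∑ j, exp (s * x j) := fun s =>
    Finset.sum_pos (fun j _ => exp_pos _) (by simp [Finset.univ_nonempty_iff, Fin.pos_iff_nonempty.mp hd])
  refine ⟨fun i => by simp [g], fun i => by simp [g], fun s i => ?_⟩
  have hS := (hSpos s).ne'
  have hN : HasDerivAt (fun s : ℝ => exp (s * x i)) (x i * exp (s * x i)) s := by
    have := ((hasDerivAt_id s).mul_const (x i)).exp
    simpa [mul_comm] using this
  have hD : HasDerivAt (fun s : ℝ => ∑ j, exp (s * x j)) (∑ j, x j * exp (s * x j)) s := by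
    apply HasDerivAt.fun_sum
    intro j _
    have := ((hasDerivAt_id s).mul_const (x j)).exp
    simpa [mul_comm] using this
  have := hN.fun_div hD hS
  refine this.congr_deriv ?_
  have hsum : ∑ j, x j * g s j = (∑ j, x j * exp (s * x j)) / ∑ j, exp (s * x j) := by
    simp only [g]
    rw [Finset.sum_div]
    congr 1; ext j; ring
  simp only [g, hsum]
  field_simp
end
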